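/- arXiv:0802.4428 — 4 statements merged into one kernel-verified Lean document; each statement's English description precedes it below -/
import Mathlib

section
/- Suppose a family of currents J^(s) ∈ J (s ≥ 2) of the form J^(s) = z^s + Σ_{i ≥ -1} J^s_i z^{-i} spans a subspace J_+ of the space J of formal Laurent series, with J = J_+ ⊕ J_-, where J_- is the span of {z^i : i ≤ 1}, and the flows ∂_s are defined by requiring (∂_s + J^(s)) J_+ ⊆ J_+ for all s ≥ 2. Then for all r, s, n ≥ 2, [∂_s, ∂_r] J^(n) = 0, i.e., the flows commute. -/
/-- Commutativity of the flows `(∂_s + J^(s)) J₊ ⊆ J₊` on the (translated) big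
cell of the Sato Grassmannian.  `A` plays the role of the space `J` of formal
Laurent series (a commutative algebra of series with smooth coefficients),
`Jp` and `Jm` are the subspaces `J₊` and `J₋` with `J₊ ∩ J₋ = 0`, `J s` are
the currents `J^(s)` (s ≥ 2) spanning `J₊`, and `D s` are the derivations
`∂_s`.  The hypotheses encode: the Leibniz rule, the symmetry
`∂_s J^(r) = ∂_r J^(s)`, the flow condition `(∂_s + J^(s)) J₊ ⊆ J₊`, and the
fact (from the explicit form of the currents) that `∂_s J^(n) ∈ J₋` with `J₋`
stable under the flows.  Conclusion: `[∂_s, ∂_r] J^(n) = 0`. -/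
theorem stmt2 (A : Type*) [CommRing A] [Algebra ℝ A]
    (Jp Jm : Submodule ℝ A) (hdisj : Jp ⊓ Jm = ⊥)
    (J : ℕ → A) (hJ : ∀ s, 2 ≤ s → J s ∈ Jp)
    (D : ℕ → A → A)
    (hDadd : ∀ s a b, D s (a + b) = D s a + D s b)
    (hDmul : ∀ s a b, D s (a * b) = D s a * b + a * D s b)
    (hsym : ∀ s r, 2 ≤ s → 2 ≤ r → D s (J r) = D r (J s))
    (hflow : ∀ s, 2 ≤ s → ∀ v ∈ Jp, D s v + J s * v ∈ Jp)
    (hJm : ∀ s n, 2 ≤ s → 2 ≤ n → D s (J n) ∈ Jm)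
    (hJmD : ∀ s v, v ∈ Jm → D s v ∈ Jm) :
    ∀ s r n, 2 ≤ s → 2 ≤ r → 2 ≤ n →
      D s (D r (J n)) - D r (D s (J n)) = 0 := by
  intro s r n hs hr hn
  set x := D s (D r (J n)) - D r (D s (J n)) with hx
  have hxm : x ∈ Jm :=
    Submodule.sub_mem _ (hJmD _ _ (hJm r n hr hn)) (hJmD _ _ (hJm s n hs hn))
  have h1 : D r (J n) + J r * J n ∈ Jp := hflow r hr _ (hJ n hn)
  have h2 : D s (D r (J n) + J r * J n) + J s * (D r (J n) + J r * J n) ∈ Jp :=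
    hflow s hs _ h1
  have h1' : D s (J n) + J s * J n ∈ Jp := hflow s hs _ (hJ n hn)
  have h2' : D r (D s (J n) + J s * J n) + J r * (D s (J n) + J s * J n) ∈ Jp :=
    hflow r hr _ h1'
  have hxp : x ∈ Jp := by
    have hsub := Submodule.sub_mem _ h2 h2'
    convert hsub using 1
    rw [hx, hDadd, hDadd, hDmul, hDmul, hsym s r hs hr]
    ring
  have hmem : x ∈ Jp ⊓ Jm := ⟨hxp, hxm⟩
  rw [hdisj] at hmem
  simpa using hmem
end

section
/- A vector field (α̇, γ̇) lies in the image of the operator matrix P₁ = [[∂_x, (1/4)∂_x T_α² α], [(α/4)∂_x T_α², (α/16)∂_x T_α⁴ α]] (where T_α = (1/α)∂_x) if and only if γ̇ = (α/4) ∂_x (1/α) ∂_x (1/α) α̇. -/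
open scoped ContDiff ENNReal NNReal

/-- The operator `T_α = (1/α)∂_x`. -/
noncomputable def Ta (α f : ℝ → ℝ) : ℝ → ℝ := fun x => (1 / α x) * deriv f x

lemma deriv_smooth {f : ℝ → ℝ} (hf : ContDiff ℝ (⊤ : ℕ∞) f) : ContDiff ℝ (⊤ : ℕ∞) (deriv f) :=
  (contDiff_infty_iff_deriv.mp hf).2

lemma Ta_smooth {α f : ℝ → ℝ} (hα : ContDiff ℝ (⊤ : ℕ∞) α) (hαpos : ∀ x, 0 < α x)
    (hf : ContDiff ℝ (⊤ : ℕ∞) f) : ContDiff ℝ (⊤ : ℕ∞) (Ta α f) := by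
  have h1 : ContDiff ℝ (⊤ : ℕ∞) (fun x => 1 / α x) := by
    simp only [one_div]
    exact hα.inv fun x => (hαpos x).ne'
  exact h1.mul (deriv_smooth hf)

lemma deriv_add_cmul {f g : ℝ → ℝ} (hf : Differentiable ℝ f) (hg : Differentiable ℝ g)
    (c x : ℝ) : deriv (fun z => f z + c * g z) x = deriv f x + c * deriv g x := by
  rw [deriv_fun_add (hf x) ((hg x).const_mul c), deriv_const_mul c (hg x)]

lemma Ta_add {α f g : ℝ → ℝ} (hf : Differentiable ℝ f) (hg : Differentiable ℝ g)
    (c : ℝ) : Ta α (fun z => f z + c * g z) = fun z => Ta α f z + c * Ta α g z := by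
  funext x
  simp only [Ta, deriv_add_cmul hf hg c x]; ring

/-- A vector field `(α̇, γ̇)` lies in the image of
`P₁ = [[∂_x, (1/4)∂_x T_α² α], [(α/4)∂_x T_α², (α/16)∂_x T_α⁴ α]]`
if and only if `γ̇ = (α/4)∂_x(1/α)∂_x(1/α)α̇`. -/
theorem stmt9 (α : ℝ → ℝ) (hα : ContDiff ℝ (⊤ : ℕ∞) α) (hαpos : ∀ x, 0 < α x)
    (adot gdot : ℝ → ℝ) (hadot : ContDiff ℝ (⊤ : ℕ∞) adot) (hgdot : ContDiff ℝ (⊤ : ℕ∞) gdot) :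
    (∃ X Y : ℝ → ℝ, ContDiff ℝ (⊤ : ℕ∞) X ∧ ContDiff ℝ (⊤ : ℕ∞) Y ∧
        (∀ x, adot x = deriv X x
          + (1/4) * deriv (Ta α (Ta α (fun y => α y * Y y))) x) ∧
        (∀ x, gdot x = (α x / 4) * deriv (Ta α (Ta α X)) x
          + (α x / 16) * deriv (Ta α (Ta α (Ta α (Ta α (fun y => α y * Y y))))) x))
    ↔ (∀ x, gdot x = (α x / 4) *
        deriv (fun y => (1 / α y) * deriv (fun z => (1 / α z) * adot z) y) x) := by
  constructor
  · rintro ⟨X, Y, hX, hY, hA, hG⟩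
    intro x
    set αY : ℝ → ℝ := fun y => α y * Y y with hαYdef
    have hαYs : ContDiff ℝ (⊤ : ℕ∞) αY := hα.mul hY
    have hT1 : ContDiff ℝ (⊤ : ℕ∞) (Ta α αY) := Ta_smooth hα hαpos hαYs
    have hT2 : ContDiff ℝ (⊤ : ℕ∞) (Ta α (Ta α αY)) := Ta_smooth hα hαpos hT1
    have hT3 : ContDiff ℝ (⊤ : ℕ∞) (Ta α (Ta α (Ta α αY))) := Ta_smooth hα hαpos hT2
    have hT4 : ContDiff ℝ (⊤ : ℕ∞) (Ta α (Ta α (Ta α (Ta α αY)))) := Ta_smooth hα hαpos hT3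
    have hTX : ContDiff ℝ (⊤ : ℕ∞) (Ta α X) := Ta_smooth hα hαpos hX
    have hTX2 : ContDiff ℝ (⊤ : ℕ∞) (Ta α (Ta α X)) := Ta_smooth hα hαpos hTX
    have e1 : (fun z => (1 / α z) * adot z)
        = fun z => Ta α X z + (1/4) * Ta α (Ta α (Ta α αY)) z := by
      funext z
      rw [hA z]
      simp only [Ta]; ring
    rw [hG x, e1]
    have e2 : (fun y => (1 / α y) * deriv (fun z => Ta α X z + (1/4) * Ta α (Ta α (Ta α αY)) z) y)
        = fun y => Ta α (Ta α X) y + (1/4) * Ta α (Ta α (Ta α (Ta α αY))) y := by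
      have h := Ta_add (α := α) (hTX.differentiable (by simp)) (hT3.differentiable (by simp)) (1/4)
      funext y
      have := congrFun h y
      simpa only [Ta] using this
    rw [e2, deriv_add_cmul (hTX2.differentiable (by simp)) (hT4.differentiable (by simp)) (1/4) x]
    ring
  · intro h
    set X : ℝ → ℝ := fun x => ∫ t in (0:ℝ)..x, adot t with hXdef
    have hc : Continuous adot := hadot.continuous
    have hXder : ∀ x, HasDerivAt X (adot x) x := fun x =>
      (hc.integral_hasStrictDerivAt 0 x).hasDerivAt
    have hder : deriv X = adot := funext fun x => (hXder x).deriv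
    have hXs : ContDiff ℝ (⊤ : ℕ∞) X := by
      refine contDiff_infty_iff_deriv.mpr ⟨fun x => (hXder x).differentiableAt, ?_⟩
      rw [hder]; exact hadot
    have hz0 : Ta α (fun y => α y * (fun _ => (0:ℝ)) y) = fun _ => (0:ℝ) := by
      funext x; simp [Ta]
    have hz : Ta α (fun _ => (0:ℝ)) = fun _ => (0:ℝ) := by
      funext x; simp [Ta]
    refine ⟨X, fun _ => 0, hXs, contDiff_const, ?_, ?_⟩
    · intro x
      rw [hz0, hz]
      simp [hder]
    · intro x
      rw [hz0, hz, hz, hz]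
      have eTX : Ta α X = fun z => (1 / α z) * adot z := by
        funext z; simp only [Ta, hder]
      have eTX2 : Ta α (Ta α X)
          = fun y => (1 / α y) * deriv (fun z => (1 / α z) * adot z) y := by
        funext y; simp only [Ta, eTX]
      rw [eTX2]
      simp [h x]
end

section
/- Along any flow (α̇, γ̇) satisfying γ̇ = (α/4)∂_x(1/α)∂_x((1/α) α̇), the quantity γ - (1/4)∂_x² ln α + (1/8)(∂_x ln α)² is conserved (its time derivative is zero). -/
open scoped ContDiff

section Helpers

lemma two_le_inf : (2 : WithTop ℕ∞) ≤ ∞ := by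
  have := WithTop.coe_le_coe.2 (le_top : (2:ℕ∞) ≤ ⊤); simpa using this

lemma one_le_inf : (1 : WithTop ℕ∞) ≤ ∞ := by
  have := WithTop.coe_le_coe.2 (le_top : (1:ℕ∞) ≤ ⊤); simpa using this

noncomputable def pd (v : ℝ × ℝ) (f : ℝ × ℝ → ℝ) : ℝ × ℝ → ℝ := fun p => fderiv ℝ f p v

lemma pd_contDiff {f : ℝ × ℝ → ℝ} (hf : ContDiff ℝ ∞ f) (v : ℝ × ℝ) :
    ContDiff ℝ ∞ (pd v f) :=
  (hf.fderiv_right (by simp)).clm_apply contDiff_const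

lemma cd_diff {f : ℝ × ℝ → ℝ} (hf : ContDiff ℝ ∞ f) (p : ℝ × ℝ) :
    DifferentiableAt ℝ f p :=
  (hf.differentiable (by simp)).differentiableAt

lemma pd_comm {f : ℝ × ℝ → ℝ} (hf : ContDiff ℝ ∞ f) (v w p : ℝ × ℝ) :
    pd v (pd w f) p = pd w (pd v f) p := by
  have hd : DifferentiableAt ℝ (fderiv ℝ f) p :=
    ((hf.fderiv_right (m := 1) (by norm_num; exact two_le_inf)).differentiable (by simp)).differentiableAt
  have key : ∀ v w : ℝ × ℝ, pd v (pd w f) p = fderiv ℝ (fderiv ℝ f) p v w := by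
    intro v w
    have h1 : HasFDerivAt (fun q => fderiv ℝ f q w)
        ((ContinuousLinearMap.apply ℝ ℝ w).comp (fderiv ℝ (fderiv ℝ f) p)) p :=
      (ContinuousLinearMap.apply ℝ ℝ w).hasFDerivAt.comp p hd.hasFDerivAt
    show fderiv ℝ (fun q => fderiv ℝ f q w) p v = _
    rw [h1.fderiv]
    simp
  rw [key, key]
  exact (hf.contDiffAt.isSymmSndFDerivAt (by rw [minSmoothness_of_isRCLikeNormedField]; exact two_le_inf)) v w

variable {f g : ℝ × ℝ → ℝ} {p v : ℝ × ℝ}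

lemma pd_sub (hf : DifferentiableAt ℝ f p) (hg : DifferentiableAt ℝ g p) :
    pd v (fun q => f q - g q) p = pd v f p - pd v g p := by
  simp [pd, fderiv_fun_sub hf hg]

lemma pd_add (hf : DifferentiableAt ℝ f p) (hg : DifferentiableAt ℝ g p) :
    pd v (fun q => f q + g q) p = pd v f p + pd v g p := by
  simp [pd, fderiv_fun_add hf hg]

lemma pd_const_mul (hg : DifferentiableAt ℝ g p) (c : ℝ) :
    pd v (fun q => c * g q) p = c * pd v g p := by
  simp [pd, fderiv_const_mul hg c]

lemma pd_mul (hf : DifferentiableAt ℝ f p) (hg : DifferentiableAt ℝ g p) :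
    pd v (fun q => f q * g q) p = pd v f p * g p + f p * pd v g p := by
  simp [pd, fderiv_fun_mul hf hg]; ring

lemma pd_inv (hf : DifferentiableAt ℝ f p) (h0 : f p ≠ 0) :
    pd v (fun q => (f q)⁻¹) p = -(pd v f p) / f p ^ 2 := by
  have h : HasFDerivAt (fun q => (f q)⁻¹) (-(f p ^ 2)⁻¹ • fderiv ℝ f p) p :=
    (hasDerivAt_inv h0).comp_hasFDerivAt p hf.hasFDerivAt
  show fderiv ℝ (fun q => (f q)⁻¹) p v = _
  rw [h.fderiv]
  simp [pd]
  field_simp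

lemma pd_log (hf : DifferentiableAt ℝ f p) (h0 : f p ≠ 0) :
    pd v (fun q => Real.log (f q)) p = pd v f p / f p := by
  simp [pd, (hf.hasFDerivAt.log h0).fderiv]; ring

lemma pd_sq (hf : DifferentiableAt ℝ f p) :
    pd v (fun q => (f q) ^ 2) p = 2 * f p * pd v f p := by
  have : (fun q => (f q) ^ 2) = fun q => f q * f q := by funext q; ring
  rw [this, pd_mul hf hf]; ring

end Helpers

/-- Partial derivative in the space variable `x` (second argument). -/
noncomputable def Dx (f : ℝ → ℝ → ℝ) : ℝ → ℝ → ℝ := fun t x => deriv (f t) x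

/-- Partial derivative in the time variable `t` (first argument). -/
noncomputable def Dt (f : ℝ → ℝ → ℝ) : ℝ → ℝ → ℝ := fun t x => deriv (fun s => f s x) t

lemma Dx_eq (f : ℝ → ℝ → ℝ) (t x : ℝ)
    (hf : DifferentiableAt ℝ (Function.uncurry f) (t, x)) :
    Dx f t x = pd (0, 1) (Function.uncurry f) (t, x) := by
  have h : HasDerivAt (fun y => ((t, y) : ℝ × ℝ)) (0, 1) x :=
    (hasDerivAt_const x t).prodMk (hasDerivAt_id x)
  exact (hf.hasFDerivAt.comp_hasDerivAt x h).deriv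

lemma Dt_eq (f : ℝ → ℝ → ℝ) (t x : ℝ)
    (hf : DifferentiableAt ℝ (Function.uncurry f) (t, x)) :
    Dt f t x = pd (1, 0) (Function.uncurry f) (t, x) := by
  have h : HasDerivAt (fun s => ((s, x) : ℝ × ℝ)) (1, 0) t :=
    (hasDerivAt_id t).prodMk (hasDerivAt_const t x)
  exact (hf.hasFDerivAt.comp_hasDerivAt t h).deriv

/-- Along any flow with `∂_t γ = (α/4)∂_x((1/α)∂_x((1/α)∂_t α))`, the quantity
`γ - (1/4)∂_x² ln α + (1/8)(∂_x ln α)²` is conserved. -/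
theorem stmt10 (α γ : ℝ → ℝ → ℝ)
    (hsα : ContDiff ℝ (⊤ : ℕ∞) (Function.uncurry α))
    (hsγ : ContDiff ℝ (⊤ : ℕ∞) (Function.uncurry γ))
    (hαpos : ∀ t x, 0 < α t x)
    (hflow : ∀ t x, Dt γ t x = (α t x / 4) *
      Dx (fun t x => (1 / α t x) *
        Dx (fun t x => (1 / α t x) * Dt α t x) t x) t x) :
    ∀ t x, Dt (fun t x => γ t x
        - (1/4) * Dx (Dx (fun t x => Real.log (α t x))) t x
        + (1/8) * (Dx (fun t x => Real.log (α t x)) t x) ^ 2) t x = 0 := by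
  set e1 : ℝ × ℝ := (1, 0)
  set e2 : ℝ × ℝ := (0, 1)
  set a : ℝ × ℝ → ℝ := Function.uncurry α with ha_def
  set g : ℝ × ℝ → ℝ := Function.uncurry γ with hg_def
  have ha : ContDiff ℝ ∞ a := hsα.of_le (by simp)
  have hg : ContDiff ℝ ∞ g := hsγ.of_le (by simp)
  have hapos : ∀ p : ℝ × ℝ, 0 < a p := fun p => hαpos p.1 p.2
  have hane : ∀ p : ℝ × ℝ, a p ≠ 0 := fun p => (hapos p).ne'
  -- L = log ∘ a
  set L : ℝ × ℝ → ℝ := fun p => Real.log (a p) with hL_def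
  have hL : ContDiff ℝ ∞ L := ha.log hane
  -- u = (1/a) * ∂t a
  set u : ℝ × ℝ → ℝ := fun q => (1 / a q) * pd e1 a q with hu_def
  have hA : ContDiff ℝ ∞ (pd e1 a) := pd_contDiff ha e1
  have hu : ContDiff ℝ ∞ u := (contDiff_const.div ha hane).mul hA
  have hpd2u : ContDiff ℝ ∞ (pd e2 u) := pd_contDiff hu e2
  have hL2 : ContDiff ℝ ∞ (pd e2 L) := pd_contDiff hL e2
  have hL22 : ContDiff ℝ ∞ (pd e2 (pd e2 L)) := pd_contDiff hL2 e2
  -- ∂t L = u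
  have hL1 : pd e1 L = u := by
    funext q
    rw [hL_def, pd_log (cd_diff ha q) (hane q), hu_def]
    ring
  -- commuted mixed partials
  have hmix : pd e1 (pd e2 L) = pd e2 u := by
    funext q
    rw [pd_comm hL e1 e2 q, hL1]
  have hmix2 : ∀ q, pd e1 (pd e2 (pd e2 L)) q = pd e2 (pd e2 u) q := by
    intro q
    rw [pd_comm hL2 e1 e2 q, hmix]
  -- conversion: Dx of log α
  have h1 : Dx (fun t x => Real.log (α t x)) = fun t x => pd e2 L (t, x) := by
    funext t x
    exact Dx_eq _ t x (cd_diff hL (t, x))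
  -- the big quantity as an uncurried function
  set G : ℝ × ℝ → ℝ := fun p =>
    g p - (1/4) * pd e2 (pd e2 L) p + (1/8) * (pd e2 L p) ^ 2 with hG_def
  have hGsm : ContDiff ℝ ∞ G :=
    (hg.sub (contDiff_const.mul hL22)).add (contDiff_const.mul (hL2.pow 2))
  have hbig : (fun t x => γ t x
        - (1/4) * Dx (Dx (fun t x => Real.log (α t x))) t x
        + (1/8) * (Dx (fun t x => Real.log (α t x)) t x) ^ 2)
      = fun t x => G (t, x) := by
    funext t x
    rw [h1]
    have h2 : Dx (fun t x => pd e2 L (t, x)) t x = pd e2 (pd e2 L) (t, x) :=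
      Dx_eq _ t x (cd_diff hL2 (t, x))
    rw [h2]
    rfl
  intro t x
  rw [hbig]
  have hDtG : Dt (fun t x => G (t, x)) t x = pd e1 G (t, x) :=
    Dt_eq _ t x (cd_diff hGsm (t, x))
  rw [hDtG]
  set p : ℝ × ℝ := (t, x) with hp_def
  -- expand ∂t G
  have hexp : pd e1 G p = pd e1 g p - (1/4) * pd e1 (pd e2 (pd e2 L)) p
      + (1/8) * (2 * pd e2 L p * pd e1 (pd e2 L) p) := by
    have d1 : DifferentiableAt ℝ (fun q => g q - (1/4) * pd e2 (pd e2 L) q) p :=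
      cd_diff (hg.sub (contDiff_const.mul hL22)) p
    have d2 : DifferentiableAt ℝ (fun q => (1/8 : ℝ) * (pd e2 L q) ^ 2) p :=
      cd_diff (contDiff_const.mul (hL2.pow 2)) p
    have e1step : pd e1 G p = pd e1 (fun q => g q - (1/4) * pd e2 (pd e2 L) q) p
        + pd e1 (fun q => (1/8 : ℝ) * (pd e2 L q) ^ 2) p := by
      have d1' : DifferentiableAt ℝ (fun q => g q - (1/4) * pd e2 (pd e2 L) q) p := d1
      exact pd_add d1 d2
    rw [e1step,
      pd_sub (cd_diff hg p) (cd_diff (contDiff_const.mul hL22) p),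
      pd_const_mul (cd_diff hL22 p),
      pd_const_mul (cd_diff (hL2.pow 2) p),
      pd_sq (cd_diff hL2 p)]
  rw [hexp, hmix2 p, hmix]
  -- the flow equation, in pd form
  have hDtα : Dt α = fun t x => pd e1 a (t, x) := by
    funext t x
    exact Dt_eq _ t x (cd_diff ha (t, x))
  have hflow' : pd e1 g p = (a p / 4) * pd e2 (fun q => (1 / a q) * pd e2 u q) p := by
    have h0 : pd e1 g p = Dt γ t x := (Dt_eq _ t x (cd_diff hg p)).symm
    rw [h0, hflow t x]
    have hin : (fun t x => (1 / α t x) * Dt α t x) = fun t x => u (t, x) := by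
      funext t x
      rw [hDtα]
      rfl
    rw [hin]
    have h3 : Dx (fun t x => u (t, x)) = fun t x => pd e2 u (t, x) := by
      funext t x
      exact Dx_eq _ t x (cd_diff hu (t, x))
    rw [h3]
    have h4 : Dx (fun t x => (1 / α t x) * pd e2 u (t, x)) t x
        = pd e2 (fun q => (1 / a q) * pd e2 u q) (t, x) :=
      Dx_eq _ t x (cd_diff ((contDiff_const.div ha hane).mul hpd2u) (t, x))
    rw [h4]
    rfl
  rw [hflow']
  -- expand the outer spatial derivative
  have hinv : (fun q => 1 / a q) = fun q => (a q)⁻¹ := by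
    funext q; rw [one_div]
  have hexp2 : pd e2 (fun q => (1 / a q) * pd e2 u q) p
      = (-(pd e2 a p) / (a p) ^ 2) * pd e2 u p + (1 / a p) * pd e2 (pd e2 u) p := by
    rw [pd_mul (cd_diff (f := fun q => 1 / a q) (contDiff_const.div ha hane) p) (cd_diff hpd2u p)]
    have : pd e2 (fun q => 1 / a q) p = -(pd e2 a p) / (a p) ^ 2 := by
      rw [hinv]; exact pd_inv (cd_diff ha p) (hane p)
    rw [this]
  rw [hexp2]
  -- ∂x L = ∂x a / a
  have hL2p : pd e2 L p = pd e2 a p / a p := pd_log (cd_diff ha p) (hane p)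
  rw [hL2p]
  have h0 : a p ≠ 0 := hane p
  field_simp
  ring
end

section
/- Setting u = γ - (1/4)∂_x² ln α + (1/8)(∂_x ln α)², the change of coordinates (α, γ) ↦ (α, u) transforms the Poisson tensor P₀ = [[0, ∂_x α],[α ∂_x, γ∂_x + ∂_x γ + (α/4)∂_x T_α² α]] into [[0, ∂_x α],[α∂_x, u∂_x + ∂_x u - (1/4)∂_x³]], and P₁ = [[∂_x, (1/4)∂_x T_α² α],[(α/4)∂_x T_α², (α/16)∂_x T_α⁴ α]] into [[∂_x, 0],[0, 0]]. -/
private lemma sm_deriv' {f : ℝ → ℝ} (hf : ContDiff ℝ (⊤:ℕ∞) f) : ContDiff ℝ (⊤:ℕ∞) (deriv f) :=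
  (contDiff_infty_iff_deriv.mp hf).2

private lemma sm_diff' {f : ℝ → ℝ} (hf : ContDiff ℝ (⊤:ℕ∞) f) : Differentiable ℝ f :=
  hf.differentiable (by simp)


/-- Off-diagonal entry of the Jacobian of the map `(α, γ) ↦ (α, u)`,
`u = γ - (1/4)∂_x² ln α + (1/8)(∂_x ln α)²`:
`A v = -(1/4)∂_x²(v/α) + (1/4)(∂_x ln α)∂_x(v/α)`. -/
noncomputable def Aop (α v : ℝ → ℝ) : ℝ → ℝ := fun x =>
  - (1/4) * deriv (deriv (fun y => v y / α y)) x
  + (1/4) * deriv (fun y => Real.log (α y)) x * deriv (fun y => v y / α y) x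

/-- The formal adjoint of `Aop`:
`A† w = -(1/(4α))∂_x² w - (1/(4α))∂_x(w ∂_x ln α)`. -/
noncomputable def Astar (α w : ℝ → ℝ) : ℝ → ℝ := fun x =>
  - (1 / (4 * α x)) * deriv (deriv w) x
  - (1 / (4 * α x)) * deriv (fun y => w y * deriv (fun z => Real.log (α z)) y) x

/-- Under the change of coordinates `(α, γ) ↦ (α, u)` with
`u = γ - (1/4)∂_x² ln α + (1/8)(∂_x ln α)²`, the Poisson tensor
`P₀ = [[0, ∂_x α],[α∂_x, γ∂_x + ∂_x γ + (α/4)∂_x T_α² α]]` becomes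
`[[0, ∂_x α],[α∂_x, u∂_x + ∂_x u - (1/4)∂_x³]]`, and
`P₁ = [[∂_x, (1/4)∂_x T_α² α],[(α/4)∂_x T_α², (α/16)∂_x T_α⁴ α]]` becomes
`[[∂_x, 0],[0, 0]]`.  The transformation is `P ↦ J P J†` with
`J = [[1, 0],[A, 1]]` and `J† = [[1, A†],[0, 1]]`; the statement is the
identity of the resulting matrix differential operators, tested on an
arbitrary smooth covector `(X, Y)`. -/
theorem stmt11 (α γ u : ℝ → ℝ) (hα : ContDiff ℝ (⊤ : ℕ∞) α) (hγ : ContDiff ℝ (⊤ : ℕ∞) γ)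
    (hαpos : ∀ x, 0 < α x)
    (hu : ∀ x, u x = γ x - (1/4) * deriv (deriv (fun y => Real.log (α y))) x
      + (1/8) * (deriv (fun y => Real.log (α y)) x) ^ 2) :
    ∀ X Y : ℝ → ℝ, ContDiff ℝ (⊤ : ℕ∞) X → ContDiff ℝ (⊤ : ℕ∞) Y →
      -- J P₀ J† = [[0, ∂_x α],[α∂_x, u∂_x + ∂_x u - (1/4)∂_x³]]
      ((∀ x, deriv (fun y => α y * Y y) x = deriv (fun y => α y * Y y) x) ∧
       (∀ x,
         Aop α (fun y => deriv (fun z => α z * Y z) y) x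
           + (α x * deriv (fun y => X y + Astar α Y y) x
              + γ x * deriv Y x + deriv (fun y => γ y * Y y) x
              + (α x / 4) * deriv (Ta α (Ta α (fun y => α y * Y y))) x)
         = α x * deriv X x + u x * deriv Y x + deriv (fun y => u y * Y y) x
           - (1/4) * deriv (deriv (deriv Y)) x)) ∧
      -- J P₁ J† = [[∂_x, 0],[0, 0]]
      ((∀ x, deriv (fun y => X y + Astar α Y y) x
          + (1/4) * deriv (Ta α (Ta α (fun y => α y * Y y))) x = deriv X x) ∧
       (∀ x,
         Aop α (fun y => deriv (fun z => X z + Astar α Y z) y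
            + (1/4) * deriv (Ta α (Ta α (fun z => α z * Y z))) y) x
           + ((α x / 4) * deriv (Ta α (Ta α (fun y => X y + Astar α Y y))) x
              + (α x / 16) *
                deriv (Ta α (Ta α (Ta α (Ta α (fun y => α y * Y y))))) x)
         = 0)) := by
  intro X Y hX hY
  have hα' : ContDiff ℝ (⊤:ℕ∞) α := hα.of_le (by simp)
  have hγ' : ContDiff ℝ (⊤:ℕ∞) γ := hγ.of_le (by simp)
  have hX' : ContDiff ℝ (⊤:ℕ∞) X := hX.of_le (by simp)
  have hY' : ContDiff ℝ (⊤:ℕ∞) Y := hY.of_le (by simp)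
  have hne : ∀ x, α x ≠ 0 := fun x => (hαpos x).ne'
  have dd : ∀ {f : ℝ → ℝ}, ContDiff ℝ (⊤:ℕ∞) f → Differentiable ℝ f := fun hf => sm_diff' hf
  set L : ℝ → ℝ := fun y => Real.log (α y) with hLdef
  have hLs : ContDiff ℝ (⊤:ℕ∞) L := hα'.log hne
  have hL1s : ContDiff ℝ (⊤:ℕ∞) (deriv L) := sm_deriv' hLs
  have hL2s : ContDiff ℝ (⊤:ℕ∞) (deriv (deriv L)) := sm_deriv' hL1s
  have hY1s : ContDiff ℝ (⊤:ℕ∞) (deriv Y) := sm_deriv' hY'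
  have hY2s : ContDiff ℝ (⊤:ℕ∞) (deriv (deriv Y)) := sm_deriv' hY1s
  have hX1s : ContDiff ℝ (⊤:ℕ∞) (deriv X) := sm_deriv' hX'
  have hL1 : ∀ x, deriv L x = deriv α x / α x := fun x =>
    ((dd hα' x).hasDerivAt.log (hne x)).deriv
  set M : ℝ → ℝ := fun y => Y y * deriv L y with hMdef
  have hMs : ContDiff ℝ (⊤:ℕ∞) M := hY'.mul hL1s
  have hM1s : ContDiff ℝ (⊤:ℕ∞) (deriv M) := sm_deriv' hMs
  have hM1 : ∀ x, deriv M x = deriv Y x * deriv L x + Y x * deriv (deriv L) x := fun x =>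
    deriv_mul (dd hY' x) (dd hL1s x)
  have hM2 : ∀ x, deriv (deriv M) x
      = deriv (deriv Y) x * deriv L x + 2*(deriv Y x * deriv (deriv L) x)
        + Y x * deriv (deriv (deriv L)) x := by
    intro x
    rw [show deriv M = fun x => deriv Y x * deriv L x + Y x * deriv (deriv L) x from
      funext hM1]
    have e : deriv (fun x => deriv Y x * deriv L x + Y x * deriv (deriv L) x) x
        = (deriv (deriv Y) x * deriv L x + deriv Y x * deriv (deriv L) x)
          + (deriv Y x * deriv (deriv L) x + Y x * deriv (deriv (deriv L)) x) := by
      rw [deriv_fun_add ((dd hY1s x).fun_mul (dd hL1s x)) ((dd hY' x).fun_mul (dd hL2s x)),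
        deriv_fun_mul (dd hY1s x) (dd hL1s x), deriv_fun_mul (dd hY' x) (dd hL2s x)]
    rw [e]; ring
  -- F1: (αY)'/α = Y' + M
  have hF1 : (fun y => deriv (fun z => α z * Y z) y / α y) = fun y => deriv Y y + M y := by
    funext x
    have e : deriv (fun z => α z * Y z) x = deriv α x * Y x + α x * deriv Y x :=
      deriv_mul (dd hα' x) (dd hY' x)
    rw [e]
    show _ = deriv Y x + Y x * deriv L x
    rw [hL1 x]; field_simp [hne x]; ring
  have hTaAY : Ta α (fun y => α y * Y y) = fun y => deriv Y y + M y := by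
    funext x
    show (1 / α x) * deriv (fun y => α y * Y y) x = _
    have e : deriv (fun z => α z * Y z) x = deriv α x * Y x + α x * deriv Y x :=
      deriv_mul (dd hα' x) (dd hY' x)
    rw [e]
    show _ = deriv Y x + Y x * deriv L x
    rw [hL1 x]; field_simp [hne x]; ring
  set G : ℝ → ℝ := fun x => 1 / α x * (deriv (deriv Y) x + deriv M x) with hGdef
  have hGs : ContDiff ℝ (⊤:ℕ∞) G := (contDiff_const.div hα' hne).mul (hY2s.add hM1s)
  have hGeq : Ta α (Ta α (fun y => α y * Y y)) = G := by
    funext x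
    show (1 / α x) * deriv (Ta α (fun y => α y * Y y)) x = G x
    rw [hTaAY]
    have e : deriv (fun y => deriv Y y + M y) x = deriv (deriv Y) x + deriv M x :=
      deriv_add (dd hY1s x) (dd hMs x)
    rw [e]
  have hAst : Astar α Y = fun x => -(1/4) * G x := by
    funext x
    simp only [Astar]
    rw [← hLdef, ← hMdef, hGdef]
    field_simp [hne x]
    ring
  have hXA : (fun y => X y + Astar α Y y) = fun y => X y - (1/4) * G y := by
    funext x; rw [hAst]; ring
  have dXAx : ∀ x, deriv (fun y => X y - (1/4) * G y) x = deriv X x - (1/4) * deriv G x := by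
    intro x
    rw [deriv_fun_sub (dd hX' x) ((dd hGs x).const_mul _), deriv_const_mul _ (dd hGs x)]
  -- claim 3
  have c3 : ∀ x, deriv (fun y => X y + Astar α Y y) x
      + (1/4) * deriv (Ta α (Ta α (fun y => α y * Y y))) x = deriv X x := by
    intro x
    rw [hXA, hGeq, dXAx x]; ring
  refine ⟨⟨fun x => rfl, ?_⟩, c3, ?_⟩
  · -- claim 2
    intro x
    have hufun : u = fun x => γ x - (1/4) * deriv (deriv L) x + (1/8) * (deriv L x)^2 := by
      funext x; rw [hLdef]; exact hu x
    have hUs : ContDiff ℝ (⊤:ℕ∞)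
        (fun x => γ x - (1/4) * deriv (deriv L) x + (1/8) * (deriv L x)^2) :=
      (hγ'.sub (contDiff_const.mul hL2s)).add (contDiff_const.mul (hL1s.pow 2))
    have hU1 : ∀ x, deriv (fun x => γ x - (1/4) * deriv (deriv L) x + (1/8) * (deriv L x)^2) x
        = deriv γ x - (1/4) * deriv (deriv (deriv L)) x
          + (1/4) * (deriv L x * deriv (deriv L) x) := by
      intro x
      have h := (((dd hγ' x).hasDerivAt.sub
          (((dd hL2s x).hasDerivAt).const_mul (1/4))).add
          ((((dd hL1s x).hasDerivAt).pow 2).const_mul (1/8)))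
      erw [h.deriv]; push_cast; ring
    have eUY : deriv (fun y => u y * Y y) x
        = (deriv γ x - (1/4) * deriv (deriv (deriv L)) x
            + (1/4) * (deriv L x * deriv (deriv L) x)) * Y x
          + (γ x - (1/4) * deriv (deriv L) x + (1/8) * (deriv L x)^2) * deriv Y x := by
      rw [hufun]
      have := deriv_fun_mul (c := fun x => γ x - (1/4) * deriv (deriv L) x + (1/8) * (deriv L x)^2)
        (d := Y) (dd hUs x) (dd hY' x)
      rw [this, hU1 x]
    have eGY : deriv (fun y => γ y * Y y) x = deriv γ x * Y x + γ x * deriv Y x :=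
      deriv_mul (dd hγ' x) (dd hY' x)
    -- Aop term
    have eAop : Aop α (fun y => deriv (fun z => α z * Y z) y) x
        = -(1/4) * (deriv (deriv (deriv Y)) x + deriv (deriv M) x)
          + (1/4) * deriv L x * (deriv (deriv Y) x + deriv M x) := by
      simp only [Aop]
      rw [← hLdef, hF1]
      have e1 : deriv (fun y => deriv Y y + M y) = fun y => deriv (deriv Y) y + deriv M y :=
        funext fun z => deriv_add (dd hY1s z) (dd hMs z)
      rw [e1]
      have e2 : deriv (fun y => deriv (deriv Y) y + deriv M y) x
          = deriv (deriv (deriv Y)) x + deriv (deriv M) x :=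
        deriv_add (dd hY2s x) (dd hM1s x)
      rw [e2]
    rw [eAop, hXA, hGeq, dXAx x, eUY, eGY, hufun, hM1 x, hM2 x]
    ring
  · -- claim 4
    intro x
    rw [show (fun y => deriv (fun z => X z + Astar α Y z) y
        + (1/4) * deriv (Ta α (Ta α (fun z => α z * Y z))) y) = fun y => deriv X y from
      funext c3]
    set P : ℝ → ℝ := fun y => deriv X y / α y with hPdef
    have hPs : ContDiff ℝ (⊤:ℕ∞) P := hX1s.div hα' hne
    have hP1s : ContDiff ℝ (⊤:ℕ∞) (deriv P) := sm_deriv' hPs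
    have eAop : Aop α (fun y => deriv X y) x
        = -(1/4) * deriv (deriv P) x + (1/4) * deriv L x * deriv P x := by
      simp only [Aop, hPdef, hLdef]
    have hTaX : Ta α X = P := by
      funext y; show (1 / α y) * deriv X y = deriv X y / α y; ring
    have hTa_s : ∀ f : ℝ → ℝ, ContDiff ℝ (⊤:ℕ∞) f → ContDiff ℝ (⊤:ℕ∞) (Ta α f) := by
      intro f hf
      unfold Ta
      exact (contDiff_const.div hα' hne).mul (sm_deriv' hf)
    have hT2Xs : ContDiff ℝ (⊤:ℕ∞) (Ta α (Ta α X)) := hTa_s _ (hTa_s _ hX')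
    have hTGs : ContDiff ℝ (⊤:ℕ∞) (Ta α G) := hTa_s _ hGs
    have hT2Gs : ContDiff ℝ (⊤:ℕ∞) (Ta α (Ta α G)) := hTa_s _ hTGs
    -- T(X + A*Y) = TX - 1/4 TG
    have hTXA1 : Ta α (fun y => X y + Astar α Y y) = fun y => Ta α X y - (1/4) * Ta α G y := by
      funext y
      show (1 / α y) * deriv (fun z => X z + Astar α Y z) y = _
      rw [hXA, dXAx y]
      show _ = (1 / α y) * deriv X y - (1/4) * ((1 / α y) * deriv G y)
      ring
    have hTXAs : ContDiff ℝ (⊤:ℕ∞) (fun y => Ta α X y - (1/4) * Ta α G y) :=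
      (hTa_s _ hX').sub (contDiff_const.mul hTGs)
    have hT2XA : Ta α (Ta α (fun y => X y + Astar α Y y))
        = fun y => Ta α (Ta α X) y - (1/4) * Ta α (Ta α G) y := by
      funext y
      show (1 / α y) * deriv (Ta α (fun z => X z + Astar α Y z)) y = _
      rw [hTXA1]
      have e : deriv (fun z => Ta α X z - (1/4) * Ta α G z) y
          = deriv (Ta α X) y - (1/4) * deriv (Ta α G) y := by
        rw [deriv_fun_sub (dd (hTa_s _ hX') y) ((dd hTGs y).const_mul _),
          deriv_const_mul _ (dd hTGs y)]
      rw [e]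
      show _ = (1 / α y) * deriv (Ta α X) y - (1/4) * ((1 / α y) * deriv (Ta α G) y)
      ring
    have eSplit : deriv (Ta α (Ta α (fun y => X y + Astar α Y y))) x
        = deriv (Ta α (Ta α X)) x - (1/4) * deriv (Ta α (Ta α G)) x := by
      rw [hT2XA]
      rw [deriv_fun_sub (dd hT2Xs x) ((dd hT2Gs x).const_mul _), deriv_const_mul _ (dd hT2Gs x)]
    have hT4 : Ta α (Ta α (Ta α (Ta α (fun y => α y * Y y)))) = Ta α (Ta α G) := by
      rw [hGeq]
    -- T²X as P'/α
    have hT2X : Ta α (Ta α X) = fun y => deriv P y / α y := by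
      funext y
      show (1 / α y) * deriv (Ta α X) y = _
      rw [hTaX]; ring
    have eT2X : deriv (Ta α (Ta α X)) x
        = (deriv (deriv P) x * α x - deriv P x * deriv α x) / (α x)^2 := by
      rw [hT2X]
      exact deriv_div (dd hP1s x) (dd hα' x) (hne x)
    rw [eAop, eSplit, hT4, eT2X, hL1 x]
    field_simp [hne x]
    ring
end
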